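/- Suppose 0 < σ ≤ 1/2. Define g(T) = ∫_{(0,∞)^p} ψ(2Tw₁, …, 2Tw_p) ρ(dw). Then g(T) = O(T^{3σ/2}) as T → ∞: there exist a constant C < ∞ and T₀ > 0 such that g(T) ≤ C T^{3σ/2} for all T ≥ T₀. Consequently the expected number of edges E[E_{α,T}] = (α²/2) g(T) satisfies E[E_{α,T}] = O(T^{3σ/2}) as T → ∞ for any fixed α > 0. -/

import Mathlib

open MeasureTheory Real Filter

/-- The Lévy measure of a generalized gamma process: the measure on `(0,∞)` with density
`w ↦ w^(-1-σ) * exp(-τ*w) / Γ(1-σ)` with respect to Lebesgue measure. -/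
noncomputable def rho0 (σ τ : ℝ) : Measure ℝ :=
  ((volume : Measure ℝ).restrict (Set.Ioi 0)).withDensity
    (fun w => ENNReal.ofReal (w ^ (-1 - σ) * Real.exp (-τ * w) / Real.Gamma (1 - σ)))

/-- The Gamma(a,b) probability measure on `(0,∞)`, with density
`x ↦ b^a x^(a−1) e^(−b x) / Γ(a)` with respect to Lebesgue measure. -/
noncomputable def gammaM (a b : ℝ) : Measure ℝ :=
  ((volume : Measure ℝ).restrict (Set.Ioi 0)).withDensity
    (fun x => ENNReal.ofReal (b ^ a * x ^ (a - 1) * Real.exp (-b * x) / Real.Gamma a))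

/-- The multivariate Lévy measure `ρ` of the compound CRM with independent gamma scores:
the pushforward of `ρ₀ ⊗ Gamma(a₁,b₁) ⊗ ⋯ ⊗ Gamma(a_p,b_p)` under
`(w₀, β₁, …, β_p) ↦ (w₀β₁, …, w₀β_p)`. -/
noncomputable def rhoC (σ τ : ℝ) (p : ℕ) (a b : Fin p → ℝ) : Measure (Fin p → ℝ) :=
  Measure.map (fun x : ℝ × (Fin p → ℝ) => fun k => x.1 * x.2 k)
    ((rho0 σ τ).prod (Measure.pi fun k => gammaM (a k) (b k)))

/-- The Laplace exponent `ψ(t) = ∫ (1 − e^{−Σ_k t_k v_k}) ρ(dv)` of the compound CRM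
(a finite quantity, expressed here as a Bochner integral). -/
noncomputable def psi (σ τ : ℝ) (p : ℕ) (a b : Fin p → ℝ) (t : Fin p → ℝ) : ℝ :=
  ∫ v, (1 - Real.exp (-∑ k, t k * v k)) ∂(rhoC σ τ p a b)

/-- `g(T) = ∫ ψ(2Tw₁,…,2Tw_p) ρ(dw)`, so that `E[E_{α,T}] = (α²/2) g(T)`. -/
noncomputable def edgesIntegral (σ τ : ℝ) (p : ℕ) (a b : Fin p → ℝ) (T : ℝ) : ℝ :=
  ∫ w, psi σ τ p a b (fun k => 2 * T * w k) ∂(rhoC σ τ p a b)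

/-!
Since `x ↦ 1 - e^{-x}` is subadditive on `[0, ∞)` and bounded by `x ^ s` for `0 ≤ s ≤ 1`,
`ψ(t) ≤ ∑ₖ tₖ ^ s Mₖ` with `Mₖ = ∫ vₖ ^ s ρ(dv)`, and hence `g(T) ≤ (2T) ^ s ∑ₖ Mₖ ^ 2`.
The moments `Mₖ` factor into a moment of `ρ₀`, finite when `s > σ`, and a moment of
`Gamma(aₖ, bₖ)`; the choice `s = 3σ/2` lies in `(σ, 1]` when `0 < σ ≤ 1/2`.
-/

lemma one_sub_exp_neg_nonneg {x : ℝ} (hx : 0 ≤ x) : 0 ≤ 1 - exp (-x) :=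
  sub_nonneg.2 (exp_le_one_iff.2 (neg_nonpos.2 hx))

lemma one_sub_exp_neg_add_le {x y : ℝ} (hx : 0 ≤ x) (hy : 0 ≤ y) :
    1 - exp (-(x + y)) ≤ (1 - exp (-x)) + (1 - exp (-y)) := by
  rw [neg_add, exp_add]
  nlinarith [mul_nonneg (one_sub_exp_neg_nonneg hx) (one_sub_exp_neg_nonneg hy)]

lemma one_sub_exp_neg_sum_le {ι : Type*} (s : Finset ι) {x : ι → ℝ} (hx : ∀ i ∈ s, 0 ≤ x i) :
    1 - exp (-∑ i ∈ s, x i) ≤ ∑ i ∈ s, (1 - exp (-x i)) := by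
  classical
  induction s using Finset.induction_on with
  | empty => simp
  | insert c t hct ih =>
    rw [Finset.sum_insert hct, Finset.sum_insert hct]
    have hxt : ∀ i ∈ t, 0 ≤ x i := fun i hi => hx i (Finset.mem_insert_of_mem hi)
    have := one_sub_exp_neg_add_le (hx c (Finset.mem_insert_self c t)) (Finset.sum_nonneg hxt)
    linarith [ih hxt]

lemma one_sub_exp_neg_le_rpow {x s : ℝ} (hx : 0 ≤ x) (hs0 : 0 ≤ s) (hs1 : s ≤ 1) :
    1 - exp (-x) ≤ x ^ s := by
  rcases le_total x 1 with h | h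
  · calc 1 - exp (-x) ≤ x := by linarith [add_one_le_exp (-x)]
      _ ≤ x ^ s := self_le_rpow_of_le_one hx h hs1
  · calc 1 - exp (-x) ≤ 1 := by linarith [exp_pos (-x)]
      _ ≤ x ^ s := one_le_rpow h hs0

lemma ae_mem_withDensity_restrict {α : Type*} [MeasurableSpace α] {μ : Measure α} {s : Set α}
    (hs : MeasurableSet s) (f : α → ENNReal) : ∀ᵐ x ∂(μ.restrict s).withDensity f, x ∈ s :=
  (ae_restrict_mem hs).filter_mono (withDensity_absolutelyContinuous _ _).ae_le

lemma integrable_rpow_withDensity_rpow_mul_exp {K u r c : ℝ} (hK : 0 ≤ K) (hr : 0 < r)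
    (hcu : -1 < c + u) :
    Integrable (fun x => x ^ c) (((volume : Measure ℝ).restrict (Set.Ioi 0)).withDensity
      fun x => ENNReal.ofReal (K * x ^ u * exp (-r * x))) := by
  rw [integrable_withDensity_iff (by fun_prop) (.of_forall fun _ => ENNReal.ofReal_lt_top)]
  refine ((integrableOn_rpow_mul_exp_neg_mul_rpow hcu one_pos hr).const_mul K).congr ?_
  filter_upwards [ae_restrict_mem measurableSet_Ioi] with x (hx : 0 < x)
  rw [ENNReal.toReal_ofReal (by positivity), rpow_add hx, rpow_one]
  ring

lemma rho0_eq (σ τ : ℝ) : rho0 σ τ = ((volume : Measure ℝ).restrict (Set.Ioi 0)).withDensity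
    fun w => ENNReal.ofReal ((Gamma (1 - σ))⁻¹ * w ^ (-1 - σ) * exp (-τ * w)) := by
  unfold rho0
  congr! 3 with w
  ring

lemma gammaM_eq (a b : ℝ) : gammaM a b = ((volume : Measure ℝ).restrict (Set.Ioi 0)).withDensity
    fun x => ENNReal.ofReal (b ^ a / Gamma a * x ^ (a - 1) * exp (-b * x)) := by
  unfold gammaM
  congr! 3 with x
  ring

lemma gammaM_eq_gammaMeasure (a b : ℝ) : gammaM a b = ProbabilityTheory.gammaMeasure a b := by
  rw [gammaM_eq, ← withDensity_indicator measurableSet_Ioi, ProbabilityTheory.gammaMeasure]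
  refine withDensity_congr_ae ?_
  filter_upwards [Measure.ae_ne volume 0] with x hx
  rcases hx.lt_or_gt with hx | hx
  · simp [Set.indicator_of_notMem (Set.notMem_Ioi.2 hx.le), ProbabilityTheory.gammaPDF_of_neg hx]
  · rw [Set.indicator_of_mem (Set.mem_Ioi.2 hx), ProbabilityTheory.gammaPDF_of_nonneg hx.le, neg_mul]

lemma isProbabilityMeasure_gammaM {a b : ℝ} (ha : 0 < a) (hb : 0 < b) :
    IsProbabilityMeasure (gammaM a b) :=
  gammaM_eq_gammaMeasure a b ▸ ProbabilityTheory.isProbabilityMeasure_gammaMeasure ha hb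

instance (a b : ℝ) : SigmaFinite (gammaM a b) := by
  unfold gammaM; infer_instance

lemma ae_pos_rho0 (σ τ : ℝ) : ∀ᵐ w ∂rho0 σ τ, 0 < w :=
  ae_mem_withDensity_restrict measurableSet_Ioi _

lemma ae_pos_gammaM (a b : ℝ) : ∀ᵐ x ∂gammaM a b, 0 < x :=
  ae_mem_withDensity_restrict measurableSet_Ioi _

lemma integrable_rpow_rho0 {σ τ c : ℝ} (hσ : σ < 1) (hτ : 0 < τ) (hc : σ < c) :
    Integrable (fun w => w ^ c) (rho0 σ τ) := by
  rw [rho0_eq]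
  exact integrable_rpow_withDensity_rpow_mul_exp (inv_nonneg.2 (Gamma_pos_of_pos (by linarith)).le)
    hτ (by linarith)

lemma integrable_rpow_gammaM {a b c : ℝ} (ha : 0 < a) (hb : 0 < b) (hc : -a < c) :
    Integrable (fun x => x ^ c) (gammaM a b) := by
  rw [gammaM_eq]
  exact integrable_rpow_withDensity_rpow_mul_exp (by positivity) hb (by linarith)

section rhoC

variable {σ τ : ℝ} {p : ℕ} {a b : Fin p → ℝ}

lemma measurable_fst_mul_snd_apply {ι : Type*} :
    Measurable fun x : ℝ × (ι → ℝ) => fun k => x.1 * x.2 k := by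
  fun_prop

lemma ae_pos_rho0_prod_pi_gammaM :
    ∀ᵐ x ∂(rho0 σ τ).prod (Measure.pi fun k => gammaM (a k) (b k)), 0 < x.1 ∧ ∀ k, 0 < x.2 k := by
  have hβ : ∀ᵐ β ∂Measure.pi fun k => gammaM (a k) (b k), ∀ k, 0 < β k :=
    eventually_all.2 fun k => Measure.tendsto_eval_ae_ae.eventually (ae_pos_gammaM (a k) (b k))
  exact (Measure.quasiMeasurePreserving_fst.ae (ae_pos_rho0 σ τ)).and
    (Measure.quasiMeasurePreserving_snd.ae hβ)

lemma ae_pos_rhoC : ∀ᵐ v ∂rhoC σ τ p a b, ∀ k, 0 < v k := by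
  have hs : MeasurableSet {v : Fin p → ℝ | ∀ k, 0 < v k} := by
    simpa only [Set.pi, Set.mem_univ, Set.mem_Ioi, true_implies] using
      MeasurableSet.univ_pi fun _ : Fin p => measurableSet_Ioi (a := (0 : ℝ))
  rw [rhoC, ae_map_iff measurable_fst_mul_snd_apply.aemeasurable hs]
  filter_upwards [ae_pos_rho0_prod_pi_gammaM] with x hx k
  exact mul_pos hx.1 (hx.2 k)

lemma integrable_apply_rpow_rhoC (hσ : σ < 1) (hτ : 0 < τ) (ha : ∀ k, 0 < a k)
    (hb : ∀ k, 0 < b k) {c : ℝ} (hσc : σ < c) (k : Fin p) (hc : -a k < c) :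
    Integrable (fun v => v k ^ c) (rhoC σ τ p a b) := by
  have := fun j => isProbabilityMeasure_gammaM (ha j) (hb j)
  rw [rhoC, integrable_map_measure
    ((measurable_pi_apply k).pow_const c).aestronglyMeasurable
    measurable_fst_mul_snd_apply.aemeasurable]
  have hβ : Integrable (fun β : Fin p → ℝ => β k ^ c) (Measure.pi fun j => gammaM (a j) (b j)) :=
    (measurePreserving_eval _ k).integrable_comp_of_integrable (g := fun x => x ^ c)
      (integrable_rpow_gammaM (ha k) (hb k) hc)
  refine ((integrable_rpow_rho0 hσ hτ hσc).mul_prod hβ).congr ?_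
  filter_upwards [ae_pos_rho0_prod_pi_gammaM] with x hx
  exact (mul_rpow hx.1.le (hx.2 k).le).symm

end rhoC

section moments

variable {ι : Type*} [Fintype ι] {μ : Measure (ι → ℝ)} {s : ℝ}

lemma integral_le_sum_mul_integral_rpow (hint : ∀ k, Integrable (fun v => v k ^ s) μ)
    {f : (ι → ℝ) → ℝ} {c : ι → ℝ} (hf0 : 0 ≤ᵐ[μ] f) (hf : ∀ᵐ v ∂μ, f v ≤ ∑ k, c k * v k ^ s) :
    ∫ v, f v ∂μ ≤ ∑ k, c k * ∫ v, v k ^ s ∂μ := by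
  have hint' : ∀ k ∈ Finset.univ, Integrable (fun v => c k * v k ^ s) μ :=
    fun k _ => (hint k).const_mul (c k)
  calc ∫ v, f v ∂μ ≤ ∫ v, ∑ k, c k * v k ^ s ∂μ :=
        integral_mono_of_nonneg hf0 (integrable_finsetSum _ hint') hf
    _ = ∑ k, c k * ∫ v, v k ^ s ∂μ := by
        rw [integral_finsetSum _ hint']
        simp only [integral_const_mul]

lemma integral_one_sub_exp_neg_le (hs0 : 0 ≤ s) (hs1 : s ≤ 1) (hμ : ∀ᵐ v ∂μ, ∀ k, 0 ≤ v k)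
    (hint : ∀ k, Integrable (fun v => v k ^ s) μ) {t : ι → ℝ} (ht : ∀ k, 0 ≤ t k) :
    ∫ v, (1 - exp (-∑ k, t k * v k)) ∂μ ≤ ∑ k, t k ^ s * ∫ v, v k ^ s ∂μ := by
  refine integral_le_sum_mul_integral_rpow hint ?_ ?_ <;> filter_upwards [hμ] with v hv
  · exact one_sub_exp_neg_nonneg (Finset.sum_nonneg fun k _ => mul_nonneg (ht k) (hv k))
  · calc 1 - exp (-∑ k, t k * v k) ≤ ∑ k, (1 - exp (-(t k * v k))) :=
          one_sub_exp_neg_sum_le _ fun k _ => mul_nonneg (ht k) (hv k)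
      _ ≤ ∑ k, t k ^ s * v k ^ s := Finset.sum_le_sum fun k _ => by
          rw [← mul_rpow (ht k) (hv k)]
          exact one_sub_exp_neg_le_rpow (mul_nonneg (ht k) (hv k)) hs0 hs1

end moments

section edges

variable {σ τ s : ℝ} {p : ℕ} {a b : Fin p → ℝ}

lemma psi_nonneg {t : Fin p → ℝ} (ht : ∀ k, 0 ≤ t k) : 0 ≤ psi σ τ p a b t := by
  refine integral_nonneg_of_ae ?_
  filter_upwards [ae_pos_rhoC] with v hv
  exact one_sub_exp_neg_nonneg (Finset.sum_nonneg fun k _ => mul_nonneg (ht k) (hv k).le)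

variable (hs0 : 0 ≤ s) (hs1 : s ≤ 1)
  (hint : ∀ k, Integrable (fun v => v k ^ s) (rhoC σ τ p a b))
include hs0 hs1 hint

lemma psi_le_sum_rpow_mul_integral_rpow {t : Fin p → ℝ} (ht : ∀ k, 0 ≤ t k) :
    psi σ τ p a b t ≤ ∑ k, t k ^ s * ∫ v, v k ^ s ∂rhoC σ τ p a b :=
  integral_one_sub_exp_neg_le hs0 hs1 (ae_pos_rhoC.mono fun _ hv k => (hv k).le) hint ht

lemma edgesIntegral_le_mul_rpow {T : ℝ} (hT : 0 ≤ T) :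
    edgesIntegral σ τ p a b T ≤ (2 ^ s * ∑ k, (∫ v, v k ^ s ∂rhoC σ τ p a b) ^ 2) * T ^ s := by
  set M := fun k => ∫ v, v k ^ s ∂rhoC σ τ p a b
  have h2T : 0 ≤ 2 * T := by positivity
  calc edgesIntegral σ τ p a b T ≤ ∑ k, ((2 * T) ^ s * M k) * M k := by
        refine integral_le_sum_mul_integral_rpow hint ?_ ?_ <;>
          filter_upwards [ae_pos_rhoC] with w hw
        · exact psi_nonneg fun k => mul_nonneg h2T (hw k).le
        · refine (psi_le_sum_rpow_mul_integral_rpow hs0 hs1 hint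
            fun k => mul_nonneg h2T (hw k).le).trans_eq (Finset.sum_congr rfl fun k _ => ?_)
          rw [mul_rpow h2T (hw k).le]
          ring
    _ = (2 ^ s * ∑ k, M k ^ 2) * T ^ s := by
        rw [mul_rpow zero_le_two hT, Finset.mul_sum, Finset.sum_mul]
        exact Finset.sum_congr rfl fun k _ => by ring

end edges

theorem edges_growth_sigma_le_half_general (σ τ : ℝ) (hσ0 : 0 < σ) (hσ : σ ≤ 1 / 2) (hτ : 0 < τ)
    (p : ℕ) (a b : Fin p → ℝ) (ha : ∀ k, 0 < a k) (hb : ∀ k, 0 < b k) :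
    (∃ C T₀ : ℝ, 0 < T₀ ∧ ∀ T ≥ T₀,
      edgesIntegral σ τ p a b T ≤ C * T ^ (3 * σ / 2)) ∧
    ∀ α : ℝ, 0 < α → ∃ C' T₁ : ℝ, 0 < T₁ ∧ ∀ T ≥ T₁,
      α ^ 2 / 2 * edgesIntegral σ τ p a b T ≤ C' * T ^ (3 * σ / 2) := by
  have hint : ∀ k, Integrable (fun v => v k ^ (3 * σ / 2)) (rhoC σ τ p a b) := fun k =>
    integrable_apply_rpow_rhoC (by linarith) hτ ha hb (by linarith) k (by linarith [ha k])
  obtain ⟨C, hC⟩ : ∃ C, ∀ T ≥ 0, edgesIntegral σ τ p a b T ≤ C * T ^ (3 * σ / 2) :=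
    ⟨_, fun T hT => edgesIntegral_le_mul_rpow (by linarith) (by linarith) hint hT⟩
  refine ⟨⟨C, 1, one_pos, fun T hT => hC T (by linarith)⟩, fun α _ => ?_⟩
  refine ⟨α ^ 2 / 2 * C, 1, one_pos, fun T hT => ?_⟩
  rw [mul_assoc]
  exact mul_le_mul_of_nonneg_left (hC T (by linarith)) (by positivity)

/-- For `0 < σ ≤ 1/2`, `g(T) = ∫ ψ(2Tw) ρ(dw) = O(T^{3σ/2})` as `T → ∞`; consequently
`E[E_{α,T}] = (α²/2) g(T) = O(T^{3σ/2})` as `T → ∞` for any fixed `α > 0`. -/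
theorem edges_growth_sigma_le_half (σ τ : ℝ) (hσ0 : 0 < σ) (hσ : σ ≤ 1 / 2) (hτ : 0 < τ)
    (p : ℕ) (hp : 1 ≤ p) (a b : Fin p → ℝ) (ha : ∀ k, 0 < a k) (hb : ∀ k, 0 < b k) :
    (∃ C T₀ : ℝ, 0 < T₀ ∧ ∀ T ≥ T₀,
      edgesIntegral σ τ p a b T ≤ C * T ^ (3 * σ / 2)) ∧
    ∀ α : ℝ, 0 < α → ∃ C' T₁ : ℝ, 0 < T₁ ∧ ∀ T ≥ T₁,
      α ^ 2 / 2 * edgesIntegral σ τ p a b T ≤ C' * T ^ (3 * σ / 2) :=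
  edges_growth_sigma_le_half_general σ τ hσ0 hσ hτ p a b ha hb
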